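/- Let H and K be separable complex Hilbert spaces, let T : H → K be a continuous linear isomorphism, let (φ_j)_{j∈ℕ} be a Riesz basis of H, and let f ∈ K. For each J ∈ ℕ let h_J = Σ_{j=1}^J c_j^{(J)} φ_j, where (c_1^{(J)}, …, c_J^{(J)}) is the unique minimizer of ‖Σ_{j=1}^J c_j T φ_j − f‖ over ℂ^J. Then h_J converges in H to h = T⁻¹ f as J → ∞, and ‖h_J − h‖ ≤ ‖T⁻¹‖ · ‖P_J f − f‖ where P_J f is the orthogonal projection of f onto span{T φ_1, …, T φ_J}. -/

import Mathlib

/-! The minimizer over `span {T φ_j : j < J}` does at least as well as the orthogonal projection,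
and pulling the residual back by `T⁻¹` gives the error bound. Since `T` and `B⁻¹` are isomorphisms,
`(T φ_j)` is the image of the orthonormal basis `(e_j)` under `T B⁻¹`, so its span is dense in `K`;
hence the best residual over the first `J` vectors tends to `0`. -/

open Filter Topology Submodule

section Minimizer

variable {𝕜 E : Type*} [NormedField 𝕜] [NormedAddCommGroup E] [NormedSpace 𝕜 E]

theorem norm_sum_smul_sub_le_of_mem_span {ι : Type*} [Fintype ι] {v : ι → E} {f y : E}
    {c : ι → 𝕜} (hc : ∀ d : ι → 𝕜, ‖∑ j, c j • v j - f‖ ≤ ‖∑ j, d j • v j - f‖)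
    (hy : y ∈ span 𝕜 (Set.range v)) :
    ‖∑ j, c j • v j - f‖ ≤ ‖y - f‖ := by
  obtain ⟨d, rfl⟩ := (mem_span_range_iff_exists_fun 𝕜).1 hy
  exact hc d

theorem eventually_mem_span_range_fin {v : ℕ → E} {y : E} (hy : y ∈ span 𝕜 (Set.range v)) :
    ∀ᶠ J in atTop, y ∈ span 𝕜 (Set.range fun j : Fin J => v j) := by
  have hmono : Monotone fun J : ℕ => span 𝕜 (Set.range fun j : Fin J => v j) := by
    refine fun J J' hJJ' => span_mono ?_
    rintro _ ⟨j, rfl⟩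
    exact ⟨Fin.castLE hJJ' j, rfl⟩
  have hunion : ⋃ J : ℕ, Set.range (fun j : Fin J => v j) = Set.range v := by
    refine Set.Subset.antisymm (Set.iUnion_subset fun J => ?_) ?_
    · rintro _ ⟨j, rfl⟩
      exact ⟨j, rfl⟩
    · rintro _ ⟨j, rfl⟩
      exact Set.mem_iUnion.2 ⟨j + 1, ⟨Fin.last j, rfl⟩⟩
  rw [← hunion, ← iSup_span, mem_iSup_of_directed _ hmono.directed_le] at hy
  obtain ⟨J₀, hJ₀⟩ := hy
  exact eventually_atTop.2 ⟨J₀, fun J hJ => hmono hJ hJ₀⟩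

theorem tendsto_norm_sum_smul_sub_of_dense_span {v : ℕ → E}
    (hv : Dense (span 𝕜 (Set.range v) : Set E)) (f : E) {c : (J : ℕ) → Fin J → 𝕜}
    (hc : ∀ (J : ℕ) (d : Fin J → 𝕜), ‖∑ j, c J j • v j - f‖ ≤ ‖∑ j, d j • v j - f‖) :
    Tendsto (fun J => ‖∑ j, c J j • v j - f‖) atTop (𝓝 0) := by
  refine tendsto_order.2 ⟨fun a ha => .of_forall fun J => ha.trans_le (norm_nonneg _),
    fun ε hε => ?_⟩
  obtain ⟨y, hyf, hy⟩ := Metric.dense_iff.1 hv f ε hε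
  rw [Metric.mem_ball, dist_eq_norm] at hyf
  filter_upwards [eventually_mem_span_range_fin hy] with J hJ
  exact (norm_sum_smul_sub_le_of_mem_span (hc J) hJ).trans_lt hyf

end Minimizer

theorem ContinuousLinearEquiv.dense_span_range_comp {𝕜 E F ι : Type*} [NormedField 𝕜]
    [NormedAddCommGroup E] [NormedSpace 𝕜 E] [NormedAddCommGroup F] [NormedSpace 𝕜 F]
    (A : E ≃L[𝕜] F) {v : ι → E} (hv : Dense (span 𝕜 (Set.range v) : Set E)) :
    Dense (span 𝕜 (Set.range (A ∘ v)) : Set F) := by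
  rw [Set.range_comp, ← A.coe_toLinearEquiv, ← LinearEquiv.coe_coe, span_image, map_coe]
  exact A.surjective.denseRange.dense_image A.continuous hv

theorem HilbertBasis.dense_span_range_of_map_eq {𝕜 E F ι : Type*} [RCLike 𝕜]
    [NormedAddCommGroup E] [InnerProductSpace 𝕜 E] [NormedAddCommGroup F] [NormedSpace 𝕜 F]
    (e : HilbertBasis ι 𝕜 E) (B : E ≃L[𝕜] E) (T : E ≃L[𝕜] F) {φ : ι → E}
    (hB : ∀ j, B (φ j) = e j) :
    Dense (span 𝕜 (Set.range fun j => T (φ j)) : Set F) := by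
  have hφ : (fun j => T (φ j)) = (B.symm.trans T) ∘ e := by
    ext j
    simp [← hB j]
  rw [hφ]
  exact (B.symm.trans T).dense_span_range_comp (dense_iff_topologicalClosure_eq_top.2 e.dense_span)

theorem ContinuousLinearEquiv.norm_sum_smul_sub_symm_le {𝕜 E F ι : Type*}
    [NontriviallyNormedField 𝕜] [NormedAddCommGroup E] [NormedSpace 𝕜 E]
    [NormedAddCommGroup F] [NormedSpace 𝕜 F] [Fintype ι]
    (T : E ≃L[𝕜] F) (φ : ι → E) (c : ι → 𝕜) (f : F) :
    ‖∑ j, c j • φ j - T.symm f‖ ≤ ‖(T.symm : F →L[𝕜] E)‖ * ‖∑ j, c j • T (φ j) - f‖ := by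
  have h : ∑ j, c j • φ j - T.symm f = (T.symm : F →L[𝕜] E) (∑ j, c j • T (φ j) - f) := by
    simp [map_sub, map_sum]
  rw [h]
  exact ContinuousLinearMap.le_opNorm _ _

theorem projection_method_converges_general
    {H K : Type*}
    [NormedAddCommGroup H] [InnerProductSpace ℂ H]
    [NormedAddCommGroup K] [InnerProductSpace ℂ K]
    (T : H ≃L[ℂ] K) (φ : ℕ → H)
    (B : H ≃L[ℂ] H) (e : HilbertBasis ℕ ℂ H) (hB : ∀ j, B (φ j) = e j)
    (f : K) (c : (J : ℕ) → Fin J → ℂ)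
    (hc : ∀ (J : ℕ) (d : Fin J → ℂ),
      ‖(∑ j, c J j • T (φ j)) - f‖ ≤ ‖(∑ j, d j • T (φ j)) - f‖) :
    Filter.Tendsto (fun J : ℕ => ∑ j : Fin J, c J j • φ j)
      Filter.atTop (nhds (T.symm f)) ∧
    ∀ J : ℕ,
      haveI : FiniteDimensional ℂ
          (Submodule.span ℂ (Set.range fun j : Fin J => T (φ j))) :=
        FiniteDimensional.span_of_finite ℂ (Set.finite_range _)
      ‖(∑ j : Fin J, c J j • φ j) - T.symm f‖ ≤
        ‖(T.symm : K →L[ℂ] H)‖ *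
          ‖(Submodule.orthogonalProjection
              (Submodule.span ℂ (Set.range fun j : Fin J => T (φ j))) f : K) - f‖ := by
  have herr J := T.norm_sum_smul_sub_symm_le (fun j : Fin J => φ j) (c J) f
  refine ⟨?_, fun J => (herr J).trans ?_⟩
  · have hres := tendsto_norm_sum_smul_sub_of_dense_span
      (e.dense_span_range_of_map_eq B T hB) f hc
    rw [tendsto_iff_norm_sub_tendsto_zero]
    refine squeeze_zero (fun J => norm_nonneg _) herr ?_
    simpa using hres.const_mul ‖(T.symm : K →L[ℂ] H)‖
  · gcongr
    exact norm_sum_smul_sub_le_of_mem_span (hc J) (coe_mem _)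

/-- Convergence of the projection method: if `T : H ≃ K` is a continuous linear
isomorphism, `(φ j)` is a Riesz basis of `H`, and for each `J` the coefficients
`c J` minimize `‖Σ_{j<J} c_j T φ_j − f‖`, then `h_J = Σ_{j<J} (c J) j • φ j`
converges to `h = T⁻¹ f`, with `‖h_J − h‖ ≤ ‖T⁻¹‖ · ‖P_J f − f‖`, where `P_J` is
the orthogonal projection onto `span {T φ_1, …, T φ_J}`. -/
theorem projection_method_converges
    {H K : Type*}
    [NormedAddCommGroup H] [InnerProductSpace ℂ H] [CompleteSpace H]
    [TopologicalSpace.SeparableSpace H]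
    [NormedAddCommGroup K] [InnerProductSpace ℂ K] [CompleteSpace K]
    [TopologicalSpace.SeparableSpace K]
    (T : H ≃L[ℂ] K) (φ : ℕ → H)
    (B : H ≃L[ℂ] H) (e : HilbertBasis ℕ ℂ H) (hB : ∀ j, B (φ j) = e j)
    (f : K) (c : (J : ℕ) → Fin J → ℂ)
    (hc : ∀ (J : ℕ) (d : Fin J → ℂ),
      ‖(∑ j, c J j • T (φ j)) - f‖ ≤ ‖(∑ j, d j • T (φ j)) - f‖) :
    Filter.Tendsto (fun J : ℕ => ∑ j : Fin J, c J j • φ j)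
      Filter.atTop (nhds (T.symm f)) ∧
    ∀ J : ℕ,
      haveI : FiniteDimensional ℂ
          (Submodule.span ℂ (Set.range fun j : Fin J => T (φ j))) :=
        FiniteDimensional.span_of_finite ℂ (Set.finite_range _)
      ‖(∑ j : Fin J, c J j • φ j) - T.symm f‖ ≤
        ‖(T.symm : K →L[ℂ] H)‖ *
          ‖(Submodule.orthogonalProjection
              (Submodule.span ℂ (Set.range fun j : Fin J => T (φ j))) f : K) - f‖ :=
  projection_method_converges_general T φ B e hB f c hc
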